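/- arXiv:1906.01835 — 2 statements merged into one kernel-verified Lean document; each statement's English description precedes it below -/
import Mathlib

section
/- The set n of matrices of the form rows ((0,0,-a,a),(0,0,-b,b),(a,b,0,0),(a,b,0,0)) with a,b ∈ ℝ is an abelian Lie subalgebra of so(3,1), and so(3,1) = k ⊕ a_p ⊕ n as a direct sum of vector spaces (Iwasawa decomposition). -/
open Matrix

noncomputable def Jmink : Matrix (Fin 4) (Fin 4) ℝ :=
  Matrix.diagonal ![1, 1, 1, -1]

def so31 (A : Matrix (Fin 4) (Fin 4) ℝ) : Prop :=
  Aᵀ * Jmink + Jmink * A = 0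

def mkK (B : Matrix (Fin 3) (Fin 3) ℝ) : Matrix (Fin 4) (Fin 4) ℝ :=
  Matrix.of fun i j =>
    if hi : i.val < 3 then
      if hj : j.val < 3 then B ⟨i.val, hi⟩ ⟨j.val, hj⟩ else 0
    else 0

def kSet : Set (Matrix (Fin 4) (Fin 4) ℝ) :=
  {A | ∃ B : Matrix (Fin 3) (Fin 3) ℝ, Bᵀ = -B ∧ A = mkK B}

def Emat : Matrix (Fin 4) (Fin 4) ℝ :=
  !![0, 0, 0, 0; 0, 0, 0, 0; 0, 0, 0, 1; 0, 0, 1, 0]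

def aP : Set (Matrix (Fin 4) (Fin 4) ℝ) := {A | ∃ α : ℝ, A = α • Emat}

/-- The nilpotent part: matrices `((0,0,-a,a),(0,0,-b,b),(a,b,0,0),(a,b,0,0))`. -/
def mkN (a b : ℝ) : Matrix (Fin 4) (Fin 4) ℝ :=
  !![0, 0, -a, a; 0, 0, -b, b; a, b, 0, 0; a, b, 0, 0]

def nSet : Set (Matrix (Fin 4) (Fin 4) ℝ) := {A | ∃ a b : ℝ, A = mkN a b}


section Aux

lemma nSet_so31 (a b : ℝ) : so31 (mkN a b) := by
  unfold so31 Jmink mkN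
  ext i j
  fin_cases i <;> fin_cases j <;>
    simp [Matrix.mul_apply, Fin.sum_univ_four, Matrix.diagonal, Matrix.transpose_apply, Matrix.vecHead, Matrix.vecTail] <;> ring

lemma mkN_mul (a b c d : ℝ) :
    mkN a b * mkN c d =
      !![0,0,0,0; 0,0,0,0; 0,0,-(a*c+b*d), a*c+b*d; 0,0,-(a*c+b*d), a*c+b*d] := by
  unfold mkN
  ext i j
  fin_cases i <;> fin_cases j <;>
    simp [Matrix.mul_apply, Fin.sum_univ_four, Matrix.transpose_apply, Matrix.vecHead, Matrix.vecTail] <;> ring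

lemma mkK_eq (B : Matrix (Fin 3) (Fin 3) ℝ) :
    mkK B = !![B 0 0, B 0 1, B 0 2, 0; B 1 0, B 1 1, B 1 2, 0;
               B 2 0, B 2 1, B 2 2, 0; 0, 0, 0, 0] := by
  ext i j
  fin_cases i <;> fin_cases j <;> rfl

end Aux

set_option maxHeartbeats 2000000 in
/-- `n` is an abelian subalgebra of `so(3,1)` and `so(3,1) = k ⊕ a_p ⊕ n`
(Iwasawa decomposition). -/
theorem iwasawa_decomposition_so31 :
    (∀ X ∈ nSet, so31 X) ∧
    (∀ X ∈ nSet, ∀ Y ∈ nSet, X * Y - Y * X ∈ nSet) ∧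
    (∀ X ∈ nSet, ∀ Y ∈ nSet, X * Y - Y * X = 0) ∧
    (∀ A : Matrix (Fin 4) (Fin 4) ℝ, so31 A →
      ∃! XYZ : Matrix (Fin 4) (Fin 4) ℝ × Matrix (Fin 4) (Fin 4) ℝ ×
          Matrix (Fin 4) (Fin 4) ℝ,
        XYZ.1 ∈ kSet ∧ XYZ.2.1 ∈ aP ∧ XYZ.2.2 ∈ nSet ∧
          A = XYZ.1 + XYZ.2.1 + XYZ.2.2) := by
  have comm : ∀ X ∈ nSet, ∀ Y ∈ nSet, X * Y - Y * X = 0 := by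
    rintro X ⟨a, b, rfl⟩ Y ⟨c, d, rfl⟩
    rw [mkN_mul, mkN_mul]
    ext i j
    fin_cases i <;> fin_cases j <;>
      simp [Matrix.vecHead, Matrix.vecTail] <;> ring
  refine ⟨fun X hX => ?_, fun X hX Y hY => ?_, comm, fun A hA => ?_⟩
  · obtain ⟨a, b, rfl⟩ := hX
    exact nSet_so31 a b
  · rw [comm X hX Y hY]
    refine ⟨0, 0, ?_⟩
    ext i j
    fin_cases i <;> fin_cases j <;> simp [mkN, Matrix.vecHead, Matrix.vecTail]
  · -- decomposition
    have hp : ∀ i j : Fin 4, A j i * (![1,1,1,-1] : Fin 4 → ℝ) j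
        + (![1,1,1,-1] : Fin 4 → ℝ) i * A i j = 0 := by
      intro i j
      have h := congrFun (congrFun hA i) j
      simpa [Jmink, Matrix.add_apply, Matrix.mul_diagonal,
        Matrix.diagonal_mul] using h
    have h33 : A 3 3 = 0 := by have := hp 3 3; simp at this; linarith
    have h03 : A 0 3 = A 3 0 := by have := hp 0 3; simp at this; linarith
    have h13 : A 1 3 = A 3 1 := by have := hp 1 3; simp at this; linarith
    have h23 : A 2 3 = A 3 2 := by have := hp 2 3; simp at this; linarith
    have h00 : A 0 0 = 0 := by have := hp 0 0; norm_num at this; linarith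
    have h11 : A 1 1 = 0 := by have := hp 1 1; norm_num at this; linarith
    have h22 : A 2 2 = 0 := by have := hp 2 2; simp at this; linarith
    have h01 : A 1 0 = -A 0 1 := by have := hp 0 1; norm_num at this; linarith
    have h02 : A 2 0 = -A 0 2 := by have := hp 0 2; simp at this; linarith
    have h12 : A 2 1 = -A 1 2 := by have := hp 1 2; simp at this; linarith
    refine ⟨(mkK (!![0, A 0 1, A 0 2 + A 3 0;
                     -A 0 1, 0, A 1 2 + A 3 1;
                     -(A 0 2 + A 3 0), -(A 1 2 + A 3 1), 0]),
             A 3 2 • Emat, mkN (A 3 0) (A 3 1)),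
           ⟨⟨_, ?_, rfl⟩, ⟨A 3 2, rfl⟩, ⟨A 3 0, A 3 1, rfl⟩, ?_⟩, ?_⟩
    · ext i j
      fin_cases i <;> fin_cases j <;>
        simp [Matrix.vecHead, Matrix.vecTail] <;> ring
    · rw [mkK_eq]
      ext i j
      fin_cases i <;> fin_cases j <;>
        simp [Emat, mkN, Matrix.add_apply, Matrix.smul_apply,
          Matrix.vecHead, Matrix.vecTail] <;>
        linarith
    · rintro ⟨K, M, N⟩ ⟨⟨B', hB', rfl⟩, ⟨β, rfl⟩, ⟨c, d, rfl⟩, hsum⟩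
      have e : ∀ i j : Fin 4,
          A i j = mkK B' i j + (β • Emat) i j + mkN c d i j := by
        intro i j; rw [hsum]; rfl
      have hc : c = A 3 0 := by
        have := e 3 0
        simp [mkK_eq, Emat, mkN, Matrix.smul_apply,
          Matrix.vecHead, Matrix.vecTail] at this
        linarith
      have hd : d = A 3 1 := by
        have := e 3 1
        simp [mkK_eq, Emat, mkN, Matrix.smul_apply,
          Matrix.vecHead, Matrix.vecTail] at this
        linarith
      have hβ : β = A 3 2 := by
        have := e 3 2
        simp [mkK_eq, Emat, mkN, Matrix.smul_apply,
          Matrix.vecHead, Matrix.vecTail] at this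
        linarith
      subst hc hd hβ
      have hKeq : mkK B' = mkK (!![0, A 0 1, A 0 2 + A 3 0;
                     -A 0 1, 0, A 1 2 + A 3 1;
                     -(A 0 2 + A 3 0), -(A 1 2 + A 3 1), 0]) := by
        rw [mkK_eq, mkK_eq]
        ext i j
        have h := e i j
        fin_cases i <;> fin_cases j <;>
          simp [mkK_eq, Emat, mkN, Matrix.smul_apply,
            Matrix.vecHead, Matrix.vecTail] at h ⊢ <;>
          linarith
      rw [hKeq]
end

section
/- Let S₁, S₂ be finite sets and a : S₁ ∪ S₂ → ℝ with a(x) > 0 for all x. If the multisets { 2 n π / a(p) : p ∈ S₁, n ∈ ℤ } and { 2 n π / a(q) : q ∈ S₂, n ∈ ℤ } are equal (with multiplicity), then the multisets { a(p) : p ∈ S₁ } and { a(q) : q ∈ S₂ } are equal. -/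
open Real

/-- Counting pairs producing the value `2π/x`: the pair `(p, n)` works iff
`a p = n * x`, and then `n` is determined by `p`. -/
lemma count_pairs {ι : Type*} [Finite ι] (a : ι → ℝ) (ha : ∀ p, 0 < a p)
    {x : ℝ} (hx : 0 < x) :
    Set.ncard {pn : ι × ℤ | 2 * (pn.2 : ℝ) * π / a pn.1 = 2 * π / x} =
    Set.ncard {p : ι | ∃ n : ℤ, a p = n * x} := by
  have key : ∀ (p : ι) (n : ℤ), (2 * (n : ℝ) * π / a p = 2 * π / x) ↔ a p = n * x := by
    intro p n
    rw [div_eq_div_iff (ha p).ne' hx.ne']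
    constructor
    · intro h
      have h2 : π * (2 * a p) = π * (2 * ((n : ℝ) * x)) := by linear_combination -h
      have h3 := mul_left_cancel₀ Real.pi_ne_zero h2
      linarith
    · intro h
      rw [h]; ring
  have himg : Prod.fst '' {pn : ι × ℤ | 2 * (pn.2 : ℝ) * π / a pn.1 = 2 * π / x}
      = {p : ι | ∃ n : ℤ, a p = n * x} := by
    ext p
    simp only [Set.mem_image, Set.mem_setOf_eq, Prod.exists]
    constructor
    · rintro ⟨p', n, h, rfl⟩
      exact ⟨n, (key _ n).1 h⟩
    · rintro ⟨n, h⟩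
      exact ⟨p, n, (key p n).2 h, rfl⟩
  have hinj : Set.InjOn Prod.fst
      {pn : ι × ℤ | 2 * (pn.2 : ℝ) * π / a pn.1 = 2 * π / x} := by
    rintro ⟨p, n⟩ hpn ⟨p', n'⟩ hpn' h
    simp only [Set.mem_setOf_eq] at hpn hpn'
    obtain rfl : p = p' := h
    have h1 := (key p n).1 hpn
    have h2 := (key p n').1 hpn'
    have h3 : (n : ℝ) * x = (n' : ℝ) * x := by linarith
    have h4 : (n : ℝ) = (n' : ℝ) := mul_right_cancel₀ hx.ne' h3
    have h5 : n = n' := by exact_mod_cast h4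
    simp [h5]
  rw [← himg, Set.ncard_image_of_injOn hinj]

/-- Splitting off the `n = 1` contribution. -/
lemma split_count {ι : Type*} [Finite ι] (a : ι → ℝ) (ha : ∀ p, 0 < a p)
    {x : ℝ} (hx : 0 < x) :
    Set.ncard {p : ι | ∃ n : ℤ, a p = n * x} =
      Set.ncard {p : ι | a p = x} + Set.ncard {p : ι | ∃ n : ℤ, 2 ≤ n ∧ a p = n * x} := by
  have hset : {p : ι | ∃ n : ℤ, a p = n * x}
      = {p : ι | a p = x} ∪ {p : ι | ∃ n : ℤ, 2 ≤ n ∧ a p = n * x} := by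
    ext p
    simp only [Set.mem_setOf_eq, Set.mem_union]
    constructor
    · rintro ⟨n, hn⟩
      have hnr : (0 : ℝ) < n := by nlinarith [ha p]
      have hn0 : 0 < n := by exact_mod_cast hnr
      rcases (by omega : n = 1 ∨ 2 ≤ n) with rfl | h2
      · left; simpa using hn
      · right; exact ⟨n, h2, hn⟩
    · rintro (h | ⟨n, _, hn⟩)
      · exact ⟨1, by simpa using h⟩
      · exact ⟨n, hn⟩
  have hdis : Disjoint {p : ι | a p = x} {p : ι | ∃ n : ℤ, 2 ≤ n ∧ a p = n * x} := by
    rw [Set.disjoint_left]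
    rintro p hp ⟨n, hn2, hnx⟩
    simp only [Set.mem_setOf_eq] at hp
    have h2 : (2 : ℝ) ≤ n := by exact_mod_cast hn2
    nlinarith
  rw [hset, Set.ncard_union_eq hdis (Set.toFinite _) (Set.toFinite _)]

/-- Fiberwise counting: the number of indices whose value satisfies `P` is the
sum over the possible values of the fiber cardinalities. -/
lemma fiber_sum {ι : Type*} [Finite ι] (a : ι → ℝ) (V : Finset ℝ) (P : ℝ → Prop)
    (hV : ∀ p : ι, P (a p) → a p ∈ V) (hP : ∀ v ∈ V, P v) :
    Set.ncard {p : ι | P (a p)} = ∑ v ∈ V, Set.ncard {p : ι | a p = v} := by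
  classical
  cases nonempty_fintype ι
  have h1 : ∀ (Q : ι → Prop), Set.ncard {p : ι | Q p} = (Finset.univ.filter Q).card := by
    intro Q
    rw [← Set.ncard_coe_finset]
    congr 1
    ext p; simp
  rw [h1]
  rw [Finset.card_eq_sum_card_fiberwise (f := a) (t := V)
    (fun p hp => hV p (Finset.mem_filter.1 hp).2)]
  refine Finset.sum_congr rfl fun v hv => ?_
  rw [h1]
  congr 1
  ext p
  simp only [Finset.mem_filter, Finset.mem_univ, true_and]
  exact ⟨fun h => h.2, fun h => ⟨h ▸ hP v hv, h⟩⟩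

/-- If the multisets `{2nπ/a₁(p) : p, n}` and `{2nπ/a₂(q) : q, n}` coincide
(counting, for each real value, the number of index pairs producing it), then the
multisets of lengths `{a₁(p)}` and `{a₂(q)}` coincide. -/
theorem length_multiset_from_zero_multiset
    {ι₁ ι₂ : Type*} [Finite ι₁] [Finite ι₂]
    (a₁ : ι₁ → ℝ) (a₂ : ι₂ → ℝ)
    (ha₁ : ∀ p, 0 < a₁ p) (ha₂ : ∀ q, 0 < a₂ q)
    (hzeros : ∀ x : ℝ,
      Set.ncard {pn : ι₁ × ℤ | 2 * (pn.2 : ℝ) * π / a₁ pn.1 = x} =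
      Set.ncard {qn : ι₂ × ℤ | 2 * (qn.2 : ℝ) * π / a₂ qn.1 = x}) :
    ∀ x : ℝ,
      Set.ncard {p : ι₁ | a₁ p = x} = Set.ncard {q : ι₂ | a₂ q = x} := by
  classical
  by_contra hcon
  push_neg at hcon
  obtain ⟨x, hx⟩ := hcon
  let s : Finset ℝ := (Set.finite_range a₁).toFinset ∪ (Set.finite_range a₂).toFinset
  have hmem₁ : ∀ p, a₁ p ∈ s := fun p => Finset.mem_union_left _ (by simp)
  have hmem₂ : ∀ q, a₂ q ∈ s := fun q => Finset.mem_union_right _ (by simp)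
  have hmem_s : ∀ v : ℝ,
      Set.ncard {p : ι₁ | a₁ p = v} ≠ Set.ncard {q : ι₂ | a₂ q = v} → v ∈ s := by
    intro v hv
    by_cases h1 : ∃ p, a₁ p = v
    · obtain ⟨p, hp⟩ := h1; exact hp ▸ hmem₁ p
    by_cases h2 : ∃ q, a₂ q = v
    · obtain ⟨q, hq⟩ := h2; exact hq ▸ hmem₂ q
    exfalso; apply hv
    push_neg at h1 h2
    have e1 : {p : ι₁ | a₁ p = v} = ∅ := by ext p; simpa using h1 p
    have e2 : {q : ι₂ | a₂ q = v} = ∅ := by ext q; simpa using h2 q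
    rw [e1, e2]
    simp
  let D : Finset ℝ := s.filter fun v =>
    Set.ncard {p : ι₁ | a₁ p = v} ≠ Set.ncard {q : ι₂ | a₂ q = v}
  have hD : D.Nonempty := ⟨x, Finset.mem_filter.2 ⟨hmem_s x hx, hx⟩⟩
  set x₀ := D.max' hD with hx₀def
  have hx₀D : x₀ ∈ D := D.max'_mem hD
  have hx₀ne := (Finset.mem_filter.1 hx₀D).2
  have hx₀s := (Finset.mem_filter.1 hx₀D).1
  have hx₀pos : 0 < x₀ := by
    rcases Finset.mem_union.1 hx₀s with h | h
    · rw [Set.Finite.mem_toFinset] at h; obtain ⟨p, hp⟩ := h; exact hp ▸ ha₁ p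
    · rw [Set.Finite.mem_toFinset] at h; obtain ⟨q, hq⟩ := h; exact hq ▸ ha₂ q
  have hmax : ∀ v, x₀ < v →
      Set.ncard {p : ι₁ | a₁ p = v} = Set.ncard {q : ι₂ | a₂ q = v} := by
    intro v hv
    by_contra hne
    exact absurd (D.le_max' v (Finset.mem_filter.2 ⟨hmem_s v hne, hne⟩)) (not_le.2 hv)
  have H := hzeros (2 * π / x₀)
  rw [count_pairs a₁ ha₁ hx₀pos, count_pairs a₂ ha₂ hx₀pos,
      split_count a₁ ha₁ hx₀pos, split_count a₂ ha₂ hx₀pos] at H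
  let P : ℝ → Prop := fun v => ∃ n : ℤ, 2 ≤ n ∧ v = ↑n * x₀
  let V : Finset ℝ := s.filter P
  have hP : ∀ v ∈ V, P v := fun v hv => (Finset.mem_filter.1 hv).2
  have t1 : Set.ncard {p : ι₁ | ∃ n : ℤ, 2 ≤ n ∧ a₁ p = ↑n * x₀}
      = ∑ v ∈ V, Set.ncard {p : ι₁ | a₁ p = v} :=
    fiber_sum a₁ V P (fun p h => Finset.mem_filter.2 ⟨hmem₁ p, h⟩) hP
  have t2 : Set.ncard {q : ι₂ | ∃ n : ℤ, 2 ≤ n ∧ a₂ q = ↑n * x₀}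
      = ∑ v ∈ V, Set.ncard {q : ι₂ | a₂ q = v} :=
    fiber_sum a₂ V P (fun q h => Finset.mem_filter.2 ⟨hmem₂ q, h⟩) hP
  have tsum : ∑ v ∈ V, Set.ncard {p : ι₁ | a₁ p = v}
      = ∑ v ∈ V, Set.ncard {q : ι₂ | a₂ q = v} := by
    refine Finset.sum_congr rfl fun v hv => ?_
    obtain ⟨n, hn2, rfl⟩ := hP v hv
    have h2 : (2 : ℝ) ≤ n := by exact_mod_cast hn2
    exact hmax _ (by nlinarith)
  rw [t1, t2, tsum] at H
  exact hx₀ne (by omega)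
end
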